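/- Let α ∈ (0,1], T > 0, and C ≥ 0. Let u : ℝ → ℝ be continuous and nonnegative on [0,T], and suppose u(t) ≤ C · ∫₀^t (t−s)^{α−1} u(s) ds for all t ∈ [0,T]. Then u(t) = 0 for all t ∈ [0,T]. -/

import Mathlib

/-!
Choose `h > 0` with `C h^α < α`. If `u` vanishes on `[0, a)` and `M` is the maximum of `u` on
`[a, a + h]`, attained at `x₀`, then only `[a, x₀]` contributes to the Abel integral at `x₀`, so
`M ≤ C M (x₀ - a)^α / α ≤ (C h^α / α) M`, forcing `M = 0`. Hence the zero set of `u` grows by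
steps of length `h` and exhausts `[0, T]`.
-/

open MeasureTheory Set intervalIntegral Filter Topology

section AbelKernel

variable {α : ℝ}

lemma intervalIntegrable_sub_rpow (hα : 0 < α) (t a b : ℝ) :
    IntervalIntegrable (fun s ↦ (t - s) ^ (α - 1)) volume a b := by
  simpa using (intervalIntegrable_rpow' (a := t - a) (b := t - b)
    (by linarith : -1 < α - 1)).comp_sub_left t

lemma integral_sub_rpow (hα : 0 < α) (a t : ℝ) :
    ∫ s in a..t, (t - s) ^ (α - 1) = (t - a) ^ α / α := by
  rw [integral_comp_sub_left (fun x ↦ x ^ (α - 1)) t, sub_self,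
    integral_rpow (Or.inl (by linarith)), sub_add_cancel, Real.zero_rpow hα.ne', sub_zero]

lemma integral_sub_rpow_mul_le {a t M : ℝ} {u : ℝ → ℝ} (hα : 0 < α) (ha : 0 ≤ a) (hat : a ≤ t)
    (hu : ContinuousOn u (Icc 0 t)) (hzero : EqOn u 0 (Ico 0 a))
    (hM : ∀ s ∈ Icc a t, u s ≤ M) :
    ∫ s in 0..t, (t - s) ^ (α - 1) * u s ≤ M * (t - a) ^ α / α := by
  have hint : ∀ b c, uIcc b c ⊆ Icc 0 t →
      IntervalIntegrable (fun s ↦ (t - s) ^ (α - 1) * u s) volume b c := fun b c hbc ↦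
    (intervalIntegrable_sub_rpow hα t b c).mul_continuousOn (hu.mono hbc)
  have hvanish : ∫ s in 0..a, (t - s) ^ (α - 1) * u s = 0 := by
    refine integral_zero_ae ?_
    filter_upwards [volume.ae_ne a] with s hsa hs
    rw [uIoc_of_le ha] at hs
    simp [hzero ⟨hs.1.le, lt_of_le_of_ne hs.2 hsa⟩]
  have hint_at := hint a t (by rw [uIcc_of_le hat]; exact Icc_subset_Icc_left ha)
  calc ∫ s in 0..t, (t - s) ^ (α - 1) * u s
      = ∫ s in a..t, (t - s) ^ (α - 1) * u s := by
        rw [← integral_add_adjacent_intervals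
          (hint 0 a (by rw [uIcc_of_le ha]; exact Icc_subset_Icc_right hat)) hint_at, hvanish,
          zero_add]
    _ ≤ ∫ s in a..t, (t - s) ^ (α - 1) * M :=
        integral_mono_on hat hint_at
          ((intervalIntegrable_sub_rpow hα t a t).mul_const M) fun s hs ↦
          mul_le_mul_of_nonneg_left (hM s hs) (Real.rpow_nonneg (sub_nonneg.2 hs.2) _)
    _ = M * (t - a) ^ α / α := by
        rw [intervalIntegral.integral_mul_const, integral_sub_rpow hα]; ring

end AbelKernel

lemma exists_pos_mul_rpow_lt {α ε : ℝ} (C : ℝ) (hα : 0 < α) (hε : 0 < ε) :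
    ∃ h > 0, C * h ^ α < ε := by
  have hlim : Tendsto (fun h : ℝ ↦ C * h ^ α) (𝓝[>] 0) (𝓝 0) := by
    simpa [Real.zero_rpow hα.ne'] using
      ((Real.continuousAt_rpow_const 0 α (Or.inr hα.le)).const_mul C).tendsto.mono_left
        nhdsWithin_le_nhds
  exact ((hlim.eventually (gt_mem_nhds hε)).and self_mem_nhdsWithin).exists.imp
    fun h hh ↦ ⟨hh.2, hh.1⟩

section Gronwall

variable {α C T h : ℝ} {u : ℝ → ℝ}

lemma eqOn_zero_Icc_of_eqOn_zero_Ico (hα : 0 < α) (hC : 0 ≤ C) (hh : C * h ^ α < α)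
    (hu : ContinuousOn u (Icc 0 T)) (hnonneg : ∀ t ∈ Icc 0 T, 0 ≤ u t)
    (hineq : ∀ t ∈ Icc 0 T, u t ≤ C * ∫ s in 0..t, (t - s) ^ (α - 1) * u s)
    {a b : ℝ} (ha : 0 ≤ a) (hab : a ≤ b) (hbh : b ≤ a + h) (hbT : b ≤ T)
    (hzero : EqOn u 0 (Ico 0 a)) : EqOn u 0 (Icc 0 b) := by
  have hsub : Icc a b ⊆ Icc 0 T := Icc_subset_Icc ha hbT
  obtain ⟨x₀, hx₀, hmax⟩ := isCompact_Icc.exists_isMaxOn (nonempty_Icc.2 hab) (hu.mono hsub)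
  have hM : 0 ≤ u x₀ := hnonneg x₀ (hsub hx₀)
  have hpow : (x₀ - a) ^ α ≤ h ^ α :=
    Real.rpow_le_rpow (sub_nonneg.2 hx₀.1) (by linarith [hx₀.2]) hα.le
  have hbound : u x₀ ≤ C * h ^ α * u x₀ / α := calc
    u x₀ ≤ C * ∫ s in 0..x₀, (x₀ - s) ^ (α - 1) * u s := hineq x₀ (hsub hx₀)
    _ ≤ C * (u x₀ * (x₀ - a) ^ α / α) := by
      gcongr
      exact integral_sub_rpow_mul_le hα ha hx₀.1 (hu.mono (Icc_subset_Icc_right (hsub hx₀).2))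
        hzero fun s hs ↦ hmax ⟨hs.1, hs.2.trans hx₀.2⟩
    _ ≤ C * (u x₀ * h ^ α / α) := by gcongr
    _ = C * h ^ α * u x₀ / α := by ring
  rw [le_div_iff₀ hα] at hbound
  have hM0 : u x₀ ≤ 0 := by nlinarith
  intro t ht
  rcases lt_or_ge t a with hta | hat
  · exact hzero ⟨ht.1, hta⟩
  · exact le_antisymm ((hmax ⟨hat, ht.2⟩).trans hM0) (hnonneg t ⟨ht.1, ht.2.trans hbT⟩)

lemma eqOn_zero_Icc_min_nat_mul (hα : 0 < α) (hC : 0 ≤ C) (hT : 0 ≤ T) (hh₀ : 0 < h)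
    (hh : C * h ^ α < α) (hu : ContinuousOn u (Icc 0 T)) (hnonneg : ∀ t ∈ Icc 0 T, 0 ≤ u t)
    (hineq : ∀ t ∈ Icc 0 T, u t ≤ C * ∫ s in 0..t, (t - s) ^ (α - 1) * u s) (n : ℕ) :
    EqOn u 0 (Icc 0 (min T (n * h : ℝ))) := by
  induction n with
  | zero =>
    simpa [hT] using eqOn_zero_Icc_of_eqOn_zero_Ico hα hC hh hu hnonneg hineq le_rfl le_rfl
      (by linarith) hT (by simp)
  | succ n ih =>
    refine eqOn_zero_Icc_of_eqOn_zero_Ico hα hC hh hu hnonneg hineq (le_min hT (by positivity))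
      (by gcongr; simp) ?_ (min_le_left _ _) (ih.mono Ico_subset_Icc_self)
    rw [← min_add_add_right]
    push_cast
    exact min_le_min (by linarith) (by linarith)

end Gronwall

theorem fractional_gronwall_vanishing_general
    (α : ℝ) (hα : α ∈ Set.Ioc (0 : ℝ) 1) (T : ℝ) (C : ℝ) (hC : 0 ≤ C)
    (u : ℝ → ℝ)
    (hu : ContinuousOn u (Set.Icc (0 : ℝ) T))
    (hnonneg : ∀ t ∈ Set.Icc (0 : ℝ) T, 0 ≤ u t)
    (hineq : ∀ t ∈ Set.Icc (0 : ℝ) T,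
      u t ≤ C * ∫ s in (0 : ℝ)..t, (t - s) ^ (α - 1) * u s) :
    ∀ t ∈ Set.Icc (0 : ℝ) T, u t = 0 := by
  intro t ht
  obtain ⟨h, hh₀, hh⟩ := exists_pos_mul_rpow_lt C hα.1 hα.1
  obtain ⟨n, hn⟩ := exists_nat_ge (T / h)
  have hTn : min T (n * h) = T := min_eq_left ((div_le_iff₀ hh₀).1 hn)
  have hzero := eqOn_zero_Icc_min_nat_mul hα.1 hC (ht.1.trans ht.2) hh₀ hh hu hnonneg hineq n
  rw [hTn] at hzero
  exact hzero ht

/-- Fractional Grönwall-type vanishing lemma for the Abel kernel `(t-s)^(α-1)`: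
if `u ≥ 0` is continuous on `[0,T]` and `u(t) ≤ C ∫₀ᵗ (t-s)^(α-1) u(s) ds` there,
then `u ≡ 0` on `[0,T]`. -/
theorem fractional_gronwall_vanishing
    (α : ℝ) (hα : α ∈ Set.Ioc (0 : ℝ) 1) (T : ℝ) (hT : 0 < T) (C : ℝ) (hC : 0 ≤ C)
    (u : ℝ → ℝ)
    (hu : ContinuousOn u (Set.Icc (0 : ℝ) T))
    (hnonneg : ∀ t ∈ Set.Icc (0 : ℝ) T, 0 ≤ u t)
    (hineq : ∀ t ∈ Set.Icc (0 : ℝ) T,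
      u t ≤ C * ∫ s in (0 : ℝ)..t, (t - s) ^ (α - 1) * u s) :
    ∀ t ∈ Set.Icc (0 : ℝ) T, u t = 0 :=
  fractional_gronwall_vanishing_general α hα T C hC u hu hnonneg hineq
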